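/- arXiv:0906.1651 — 2 statements merged into one kernel-verified Lean document; each statement's English description precedes it below -/
import Mathlib

section
/- Let ν_β be the generalized Cauchy distribution on ℝⁿ with parameter β > n/2, and suppose C(β, n) is a constant such that Var_{ν_β}(g) ≤ C(β, n) ∫ |∇g(x)|² (1 + |x|²) dν_β(x) holds for all bounded smooth functions g on ℝⁿ. Then C(β, n) ≥ (β + 2) / (4β(β − n/2 + 1)) ≥ 1/(4β). In particular, testing with g(x) = 1/(1 + |x|²) gives Var_{ν_β}(g) = (β − n/2)(n/2) / (β²(β + 1)) and ∫ |∇g(x)|² (1 + |x|²) dν_β(x) = 4(β − n/2)(β − n/2 + 1)(n/2) / (β(β + 1)(β + 2)). -/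
/-!
Test the inequality on `g = 1 / (1 + |x|²)`. Its moments under `ν_β` follow from the recursion
`∫ (1 + |x|²)^(-(b+1)) = ((b - n/2) / b) ∫ (1 + |x|²)^(-b)`, which in polar coordinates says that
the derivative of `r^n (1 + r²)^(-b)` integrates to zero over `(0, ∞)`. Since
`|∇g|² (1 + |x|²) = 4g² - 4g³`, both sides of the inequality are explicit in `β` and `n`, and their
ratio is `(β + 2) / (4β(β - n/2 + 1))`.
-/

open MeasureTheory Real
open scoped ENNReal

/-- The generalized Cauchy distribution `ν_β` on `ℝⁿ`, i.e. the probability measure with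
density `(1/Z)(1 + |x|²)^{−β}`, where `Z` is the normalizing constant. -/
noncomputable def cauchyMeasure (n : ℕ) (β : ℝ) : Measure (EuclideanSpace ℝ (Fin n)) :=
  volume.withDensity fun x =>
    ENNReal.ofReal
      ((1 + ‖x‖ ^ 2) ^ (-β) / ∫ y : EuclideanSpace ℝ (Fin n), (1 + ‖y‖ ^ 2) ^ (-β))

open Set Filter Topology

theorem hasDerivAt_pow_mul_one_add_sq_rpow_neg {n : ℕ} (hn : 0 < n) (b r : ℝ) :
    HasDerivAt (fun r : ℝ => r ^ n * (1 + r ^ 2) ^ (-b))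
      (r ^ (n - 1) * ((n - 2 * b) * (1 + r ^ 2) ^ (-b) + 2 * b * (1 + r ^ 2) ^ (-(b + 1)))) r := by
  have hpos : 0 < 1 + r ^ 2 := by positivity
  have hφ : HasDerivAt (fun r : ℝ => (1 + r ^ 2) ^ (-b))
      (((2 : ℕ) : ℝ) * r ^ (2 - 1) * (-b) * (1 + r ^ 2) ^ (-b - 1)) r :=
    ((hasDerivAt_pow 2 r).const_add 1).rpow_const (Or.inl hpos.ne')
  refine ((hasDerivAt_pow n r).mul hφ).congr_deriv ?_
  have hshift : (1 + r ^ 2) ^ (-b) = (1 + r ^ 2) ^ (-(b + 1)) * (1 + r ^ 2) := by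
    rw [← rpow_add_one hpos.ne']; ring_nf
  obtain ⟨k, rfl⟩ := Nat.exists_eq_add_of_lt hn
  rw [show -b - 1 = -(b + 1) by ring, hshift]
  simp only [Nat.add_sub_cancel, zero_add, pow_succ, Nat.cast_add, Nat.cast_one, Nat.cast_ofNat]
  ring

theorem tendsto_pow_mul_one_add_sq_rpow_neg_atTop {n : ℕ} {b : ℝ} (hb : n < 2 * b) :
    Tendsto (fun r : ℝ => r ^ n * (1 + r ^ 2) ^ (-b)) atTop (𝓝 0) := by
  refine squeeze_zero' ?_ ?_ ((tendsto_rpow_neg_atTop (by linarith : 0 < b - n / 2)).comp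
    (tendsto_atTop_add_const_left _ 1 (tendsto_pow_atTop two_ne_zero)))
  · filter_upwards [eventually_ge_atTop 0] with r hr
    positivity
  · filter_upwards [eventually_ge_atTop 0] with r hr
    have hpos : 0 < 1 + r ^ 2 := by positivity
    have hr : r ^ n ≤ (1 + r ^ 2) ^ ((n : ℝ) / 2) := by
      calc r ^ n = (r ^ 2) ^ ((n : ℝ) / 2) := by
            rw [← rpow_natCast r 2, ← rpow_mul hr, Nat.cast_ofNat,
              mul_div_cancel₀ _ two_ne_zero, rpow_natCast]
        _ ≤ (1 + r ^ 2) ^ ((n : ℝ) / 2) := by gcongr; linarith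
    calc r ^ n * (1 + r ^ 2) ^ (-b) ≤ (1 + r ^ 2) ^ ((n : ℝ) / 2) * (1 + r ^ 2) ^ (-b) := by
          gcongr
      _ = (1 + r ^ 2) ^ (-(b - n / 2)) := by rw [← rpow_add hpos]; ring_nf

theorem one_div_one_add_norm_sq_le_one {E : Type*} [Norm E] (x : E) : 1 / (1 + ‖x‖ ^ 2) ≤ 1 :=
  div_le_one_of_le₀ (le_add_of_nonneg_right (sq_nonneg _)) (by positivity)

section HaarMeasure

variable {E : Type*} [NormedAddCommGroup E] [NormedSpace ℝ E] [FiniteDimensional ℝ E]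
  [MeasurableSpace E] [BorelSpace E] (μ : Measure E) [μ.IsAddHaarMeasure]

theorem integrable_one_add_norm_sq_rpow_neg {b : ℝ} (hb : (Module.finrank ℝ E : ℝ) / 2 < b) :
    Integrable (fun x : E => (1 + ‖x‖ ^ 2) ^ (-b)) μ := by
  simpa only [neg_div, mul_div_cancel_left₀ b two_ne_zero] using
    integrable_rpow_neg_one_add_norm_sq (μ := μ) (r := 2 * b) (by linarith)

theorem integral_one_add_norm_sq_rpow_neg_add_one [Nontrivial E] {b : ℝ}
    (hb : (Module.finrank ℝ E : ℝ) / 2 < b) :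
    ∫ x, (1 + ‖x‖ ^ 2) ^ (-(b + 1)) ∂μ =
      (b - Module.finrank ℝ E / 2) / b * ∫ x, (1 + ‖x‖ ^ 2) ^ (-b) ∂μ := by
  set d := Module.finrank ℝ E
  have hd : 0 < d := Module.finrank_pos
  have hb0 : 0 < b := lt_of_le_of_lt (by positivity) hb
  set f : ℝ → ℝ := fun r => (d - 2 * b) * (1 + r ^ 2) ^ (-b) + 2 * b * (1 + r ^ 2) ^ (-(b + 1))
  have hf : Integrable (fun x : E => f ‖x‖) μ :=
    ((integrable_one_add_norm_sq_rpow_neg μ hb).const_mul _).add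
      ((integrable_one_add_norm_sq_rpow_neg μ (by linarith)).const_mul _)
  -- `r^(d-1) f r` is the derivative of `r^d (1 + r²)^(-b)`, which vanishes at `0` and `∞`
  have hradial : ∫ r in Ioi (0 : ℝ), r ^ (d - 1) • f r = 0 := by
    have := integral_Ioi_of_hasDerivAt_of_tendsto'
      (fun r _ => hasDerivAt_pow_mul_one_add_sq_rpow_neg hd b r)
      ((integrable_fun_norm_addHaar μ).1 hf) (tendsto_pow_mul_one_add_sq_rpow_neg_atTop
        (by linarith))
    simpa only [zero_pow hd.ne', zero_mul, sub_zero, smul_eq_mul] using this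
  have hzero : ∫ x, f ‖x‖ ∂μ = 0 := by
    rw [integral_fun_norm_addHaar, hradial, smul_zero, smul_zero]
  rw [integral_add ((integrable_one_add_norm_sq_rpow_neg μ hb).const_mul _)
    ((integrable_one_add_norm_sq_rpow_neg μ (by linarith)).const_mul _),
    integral_const_mul, integral_const_mul] at hzero
  field_simp
  linarith

theorem integral_one_add_norm_sq_rpow_neg_add_nat [Nontrivial E] {b : ℝ}
    (hb : (Module.finrank ℝ E : ℝ) / 2 < b) (m : ℕ) :
    ∫ x, (1 + ‖x‖ ^ 2) ^ (-(b + m)) ∂μ =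
      (∏ k ∈ Finset.range m, (b + k - Module.finrank ℝ E / 2) / (b + k)) *
        ∫ x, (1 + ‖x‖ ^ 2) ^ (-b) ∂μ := by
  induction m with
  | zero => simp
  | succ m ih =>
    have hbm : (Module.finrank ℝ E : ℝ) / 2 < b + m := by linarith [(m.cast_nonneg : (0 : ℝ) ≤ m)]
    rw [Nat.cast_succ, ← add_assoc, integral_one_add_norm_sq_rpow_neg_add_one μ hbm, ih,
      Finset.prod_range_succ]
    ring

end HaarMeasure

section InnerProductSpace

variable {E : Type*} [NormedAddCommGroup E] [InnerProductSpace ℝ E] [CompleteSpace E]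

theorem gradient_one_div_one_add_norm_sq (x : E) :
    gradient (fun y : E => 1 / (1 + ‖y‖ ^ 2)) x = (-(2 / (1 + ‖x‖ ^ 2) ^ 2)) • x := by
  have hpos : 0 < 1 + ‖x‖ ^ 2 := by positivity
  have hinv : HasDerivAt (fun t : ℝ => 1 / t) (-((1 + ‖x‖ ^ 2) ^ 2)⁻¹) (1 + ‖x‖ ^ 2) := by
    simpa using hasDerivAt_inv hpos.ne'
  refine HasGradientAt.gradient <| hasGradientAt_iff_hasFDerivAt.2 <|
    (hinv.comp_hasFDerivAt x ((hasStrictFDerivAt_norm_sq x).hasFDerivAt.const_add 1)).congr_fderiv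
      (ContinuousLinearMap.ext fun y => ?_)
  simp only [InnerProductSpace.toDual_apply_apply, smul_apply,
    innerSL_apply_apply, real_inner_smul_left, nsmul_eq_mul, smul_eq_mul]
  field_simp
  push_cast
  ring

theorem norm_gradient_one_div_one_add_norm_sq_sq_mul (x : E) :
    ‖gradient (fun y : E => 1 / (1 + ‖y‖ ^ 2)) x‖ ^ 2 * (1 + ‖x‖ ^ 2) =
      4 * (1 / (1 + ‖x‖ ^ 2)) ^ 2 - 4 * (1 / (1 + ‖x‖ ^ 2)) ^ 3 := by
  have hpos : 0 < 1 + ‖x‖ ^ 2 := by positivity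
  rw [gradient_one_div_one_add_norm_sq, norm_smul, norm_neg, Real.norm_of_nonneg (by positivity)]
  field_simp
  ring

end InnerProductSpace

namespace cauchyMeasure

variable {n : ℕ} {β : ℝ}

theorem integral_eq (f : EuclideanSpace ℝ (Fin n) → ℝ) :
    ∫ x, f x ∂cauchyMeasure n β =
      (∫ x, (1 + ‖x‖ ^ 2) ^ (-β) * f x) / ∫ y : EuclideanSpace ℝ (Fin n), (1 + ‖y‖ ^ 2) ^ (-β) := by
  rw [cauchyMeasure, integral_withDensity_eq_integral_toReal_smul (by fun_prop)
    (.of_forall fun _ => ENNReal.ofReal_lt_top), ← integral_div]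
  refine integral_congr_ae (.of_forall fun x => ?_)
  dsimp only
  rw [ENNReal.toReal_ofReal (by positivity), smul_eq_mul]
  ring

theorem normalizer_pos (hβ : (n : ℝ) / 2 < β) :
    0 < ∫ y : EuclideanSpace ℝ (Fin n), (1 + ‖y‖ ^ 2) ^ (-β) := by
  rw [integral_pos_iff_support_of_nonneg (fun _ => by positivity)
    (integrable_one_add_norm_sq_rpow_neg _ (by simpa using hβ))]
  have : Function.support (fun y : EuclideanSpace ℝ (Fin n) => (1 + ‖y‖ ^ 2) ^ (-β)) = Set.univ :=
    Function.support_eq_univ fun y => by positivity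
  rw [this]
  exact isOpen_univ.measure_pos _ Set.univ_nonempty

theorem isProbabilityMeasure (hβ : (n : ℝ) / 2 < β) : IsProbabilityMeasure (cauchyMeasure n β) := by
  constructor
  rw [cauchyMeasure, withDensity_apply _ MeasurableSet.univ, Measure.restrict_univ,
    ← ofReal_integral_eq_lintegral_ofReal _ (.of_forall fun _ => by positivity), integral_div,
    div_self (normalizer_pos hβ).ne', ENNReal.ofReal_one]
  exact (integrable_one_add_norm_sq_rpow_neg _ (by simpa using hβ)).div_const _

theorem integral_one_div_one_add_norm_sq_pow (hn : 0 < n) (hβ : (n : ℝ) / 2 < β) (m : ℕ) :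
    ∫ x, (1 / (1 + ‖x‖ ^ 2)) ^ m ∂cauchyMeasure n β =
      ∏ k ∈ Finset.range m, (β + k - n / 2) / (β + k) := by
  have : Nonempty (Fin n) := ⟨⟨0, hn⟩⟩
  have hweight : ∀ x : EuclideanSpace ℝ (Fin n),
      (1 + ‖x‖ ^ 2) ^ (-β) * (1 / (1 + ‖x‖ ^ 2)) ^ m = (1 + ‖x‖ ^ 2) ^ (-(β + m)) := fun x => by
    have hpos : 0 < 1 + ‖x‖ ^ 2 := by positivity
    rw [one_div, inv_pow, ← rpow_natCast (1 + ‖x‖ ^ 2) m, ← rpow_neg hpos.le, ← rpow_add hpos,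
      neg_add]
  have := integral_one_add_norm_sq_rpow_neg_add_nat (volume : Measure (EuclideanSpace ℝ (Fin n)))
    (by simpa using hβ) m
  rw [integral_eq, funext hweight, this, finrank_euclideanSpace_fin,
    mul_div_cancel_right₀ _ (normalizer_pos hβ).ne']

theorem variance_one_div_one_add_norm_sq (hn : 0 < n) (hβ : (n : ℝ) / 2 < β) :
    (∫ x, (1 / (1 + ‖x‖ ^ 2)) ^ 2 ∂cauchyMeasure n β) -
        (∫ x, 1 / (1 + ‖x‖ ^ 2) ∂cauchyMeasure n β) ^ 2 =
      (β - n / 2) * (n / 2) / (β ^ 2 * (β + 1)) := by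
  have hβ0 : 0 < β := lt_of_le_of_lt (by positivity) hβ
  have hmean := integral_one_div_one_add_norm_sq_pow hn hβ 1
  simp only [pow_one] at hmean
  rw [hmean, integral_one_div_one_add_norm_sq_pow hn hβ 2]
  simp only [Finset.prod_range_succ, Finset.prod_range_zero, Nat.cast_zero, Nat.cast_one]
  field_simp
  ring

theorem integral_norm_gradient_one_div_one_add_norm_sq_sq_mul (hn : 0 < n)
    (hβ : (n : ℝ) / 2 < β) :
    ∫ x, ‖gradient (fun y : EuclideanSpace ℝ (Fin n) => 1 / (1 + ‖y‖ ^ 2)) x‖ ^ 2 *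
        (1 + ‖x‖ ^ 2) ∂cauchyMeasure n β =
      4 * (β - n / 2) * (β - n / 2 + 1) * (n / 2) / (β * (β + 1) * (β + 2)) := by
  have hβ0 : 0 < β := lt_of_le_of_lt (by positivity) hβ
  have := isProbabilityMeasure hβ
  have hcont : Continuous fun x : EuclideanSpace ℝ (Fin n) => 1 / (1 + ‖x‖ ^ 2) :=
    continuous_const.div (by fun_prop) fun x => by positivity
  have hint : ∀ m : ℕ, Integrable (fun x : EuclideanSpace ℝ (Fin n) => 4 * (1 / (1 + ‖x‖ ^ 2)) ^ m)
      (cauchyMeasure n β) := fun m =>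
    Integrable.of_bound (continuous_const.mul (hcont.pow m)).aestronglyMeasurable 4 <|
      .of_forall fun x => by
        rw [Real.norm_of_nonneg (by positivity)]
        exact mul_le_of_le_one_right zero_le_four
          (pow_le_one₀ (by positivity) (one_div_one_add_norm_sq_le_one x))
  simp_rw [norm_gradient_one_div_one_add_norm_sq_sq_mul]
  rw [integral_sub (hint 2) (hint 3), integral_const_mul, integral_const_mul,
    integral_one_div_one_add_norm_sq_pow hn hβ 2, integral_one_div_one_add_norm_sq_pow hn hβ 3]
  simp only [Finset.prod_range_succ, Finset.prod_range_zero, Nat.cast_zero, Nat.cast_one,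
    Nat.cast_ofNat]
  field_simp
  ring

end cauchyMeasure

/-- **Optimality of the constant in the weighted Poincaré inequality for `ν_β`**:
if `Var_{ν_β}(g) ≤ C(β,n) ∫ |∇g|²(1+|x|²) dν_β` for all bounded smooth `g`, then
`C(β,n) ≥ (β+2)/(4β(β−n/2+1)) ≥ 1/(4β)`; moreover for the test function
`g(x) = 1/(1+|x|²)` one has `Var_{ν_β}(g) = (β−n/2)(n/2)/(β²(β+1))` and
`∫ |∇g|²(1+|x|²) dν_β = 4(β−n/2)(β−n/2+1)(n/2)/(β(β+1)(β+2))`. -/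
theorem weighted_poincare_cauchy_constant_lower_bound
    {n : ℕ} (hn : 0 < n) (β : ℝ) (hβ : (n : ℝ) / 2 < β) (C : ℝ)
    (hC : ∀ g : EuclideanSpace ℝ (Fin n) → ℝ,
      ContDiff ℝ (⊤ : ℕ∞) g → (∃ M, ∀ x, |g x| ≤ M) →
      (∫ x, g x ^ 2 ∂cauchyMeasure n β) - (∫ x, g x ∂cauchyMeasure n β) ^ 2 ≤
        C * ∫ x, ‖gradient g x‖ ^ 2 * (1 + ‖x‖ ^ 2) ∂cauchyMeasure n β) :
    ((β + 2) / (4 * β * (β - n / 2 + 1)) ≤ C ∧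
      1 / (4 * β) ≤ (β + 2) / (4 * β * (β - n / 2 + 1))) ∧
    (∫ x, (1 / (1 + ‖x‖ ^ 2)) ^ 2 ∂cauchyMeasure n β) -
        (∫ x, 1 / (1 + ‖x‖ ^ 2) ∂cauchyMeasure n β) ^ 2 =
      (β - n / 2) * (n / 2) / (β ^ 2 * (β + 1)) ∧
    ∫ x, ‖gradient (fun y : EuclideanSpace ℝ (Fin n) => 1 / (1 + ‖y‖ ^ 2)) x‖ ^ 2 *
        (1 + ‖x‖ ^ 2) ∂cauchyMeasure n β =
      4 * (β - n / 2) * (β - n / 2 + 1) * (n / 2) / (β * (β + 1) * (β + 2)) := by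
  have hn' : (0 : ℝ) < n := Nat.cast_pos.2 hn
  have hβn : 0 < β - n / 2 := by linarith
  have hβ0 : 0 < β := by linarith
  have hden : 0 < 4 * β * (β - n / 2 + 1) := by positivity
  have hvar := cauchyMeasure.variance_one_div_one_add_norm_sq hn hβ
  have hgrad := cauchyMeasure.integral_norm_gradient_one_div_one_add_norm_sq_sq_mul hn hβ
  refine ⟨⟨?_, ?_⟩, hvar, hgrad⟩
  · have hsmooth : ContDiff ℝ (⊤ : ℕ∞) fun y : EuclideanSpace ℝ (Fin n) => 1 / (1 + ‖y‖ ^ 2) :=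
      contDiff_const.div (contDiff_const.add (contDiff_norm_sq ℝ)) fun x => by positivity
    have hbdd : ∃ M, ∀ x : EuclideanSpace ℝ (Fin n), |1 / (1 + ‖x‖ ^ 2)| ≤ M :=
      ⟨1, fun x => (abs_of_pos (by positivity)).trans_le (one_div_one_add_norm_sq_le_one x)⟩
    have hpoincare := hC _ hsmooth hbdd
    rw [hvar, hgrad] at hpoincare
    refine le_of_mul_le_mul_right (le_of_eq_of_le ?_ hpoincare) (by positivity)
    rw [div_mul_div_comm, div_eq_div_iff (mul_pos hden (by positivity)).ne' (by positivity)]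
    ring
  · rw [div_le_div_iff₀ (by positivity) hden]
    nlinarith
end

section
/- Let μ be a probability measure on ℝⁿ satisfying, for some constants a > 0 and b ∈ [0, 1), the weighted inequality ∫ |g − m|² dμ ≤ ∫ |∇g(x)|² (a + b|x|²) dμ(x) for all smooth g on ℝⁿ, where m is a μ-median of g. Then for any smooth g on ℝⁿ, inf_{c ∈ ℝ} ∫ |g(x) − c|² / (a + b|x|²) dμ(x) ≤ (1/(1 − √b)²) ∫ |∇g|² dμ. -/
open MeasureTheory Real Filter Set Topology
open scoped ENNReal

/-!
Let `m` be a median of `g` and `s x = √(a + b‖x‖²)`. The function `f = (g - m) / s` is smooth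
with median `0`, so the hypothesis gives `∫ f² ≤ ∫ (s ‖∇f‖)²`. Differentiating `g - m = s f` and
using `‖∇s‖ ≤ √b` gives `|‖∇g‖ - s ‖∇f‖| ≤ √b |f|` pointwise, hence `‖f‖₂ ≤ ‖∇g‖₂ + √b ‖f‖₂`;
absorbing the last term bounds `∫ f²`, which is the value at `c = m` of the function whose
infimum is taken.
-/

section Median

variable {α : Type*} [MeasurableSpace α] {μ : Measure α} {g : α → ℝ}

lemma tendsto_measure_setOf_le_atTop (μ : Measure α) (g : α → ℝ) :
    Tendsto (fun t => μ {x | g x ≤ t}) atTop (𝓝 (μ univ)) := by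
  have hU : (⋃ t : ℝ, {x | g x ≤ t}) = univ :=
    iUnion_eq_univ_iff.2 fun x => ⟨g x, show g x ≤ g x from le_rfl⟩
  rw [← hU]
  exact tendsto_measure_iUnion_atTop fun s t hst x hx => le_trans hx hst

lemma le_measure_setOf_le_of_forall_gt [IsFiniteMeasure μ] (hg : Measurable g) {m : ℝ}
    {c : ℝ≥0∞} (h : ∀ t > m, c ≤ μ {x | g x ≤ t}) : c ≤ μ {x | g x ≤ m} := by
  have hI : (⋂ t > m, {x | g x ≤ t}) = {x | g x ≤ m} := by
    ext x
    simpa using forall_gt_imp_ge_iff_le_of_dense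
  have hlim := tendsto_measure_biInter_gt (μ := μ) (s := fun t => {x | g x ≤ t}) (a := m)
    (fun t _ => (hg measurableSet_Iic).nullMeasurableSet) (fun _ _ _ hij _ hx => hx.trans hij)
    ⟨m + 1, by linarith, measure_ne_top _ _⟩
  rw [hI] at hlim
  exact ge_of_tendsto hlim (eventually_nhdsWithin_of_forall h)

lemma half_le_prob_compl_iff [IsProbabilityMeasure μ] {s : Set α} (hs : MeasurableSet s) :
    1 / 2 ≤ μ sᶜ ↔ μ s ≤ 1 / 2 := by
  rw [prob_compl_eq_one_sub hs, ENNReal.le_sub_iff_add_le_right (measure_ne_top _ _) prob_le_one]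
  nth_rewrite 2 [← ENNReal.add_halves 1]
  rw [ENNReal.add_le_add_iff_left (by simp)]

theorem exists_median [IsProbabilityMeasure μ] (hg : Measurable g) :
    ∃ m : ℝ, 1 / 2 ≤ μ {x | m ≤ g x} ∧ 1 / 2 ≤ μ {x | g x ≤ m} := by
  set S := {t : ℝ | 1 / 2 ≤ μ {x | g x ≤ t}}
  have half_lt : (1 / 2 : ℝ≥0∞) < μ univ := by simp
  obtain ⟨t₀, ht₀⟩ := ((tendsto_measure_setOf_le_atTop μ g).eventually_const_lt half_lt).exists
  obtain ⟨t₁, ht₁⟩ :=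
    ((tendsto_measure_setOf_le_atTop μ (-g)).eventually_const_lt half_lt).exists
  have hS : S.Nonempty := ⟨t₀, ht₀.le⟩
  have hS_bdd : BddBelow S := by
    refine ⟨-t₁, fun s hs => le_of_not_gt fun hst => ?_⟩
    have hsub : {x | g x ≤ s} ⊆ {x | (-g) x ≤ t₁}ᶜ :=
      fun x (hx : g x ≤ s) (hx' : -g x ≤ t₁) => by linarith
    have := (half_le_prob_compl_iff (hg.neg measurableSet_Iic)).1 (hs.trans (measure_mono hsub))
    exact this.not_gt ht₁
  refine ⟨sInf S, ?_, le_measure_setOf_le_of_forall_gt hg fun t ht => ?_⟩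
  · have := le_measure_setOf_le_of_forall_gt (c := 1 / 2) hg.neg (m := -sInf S) fun t ht => by
      have hlt : μ {x | g x ≤ -t} ≤ 1 / 2 :=
        le_of_lt (not_le.1 (notMem_of_lt_csInf (s := S) (by linarith) hS_bdd))
      refine ((half_le_prob_compl_iff (hg measurableSet_Iic)).2 hlt).trans (measure_mono ?_)
      intro x (hx : ¬g x ≤ -t)
      show -g x ≤ t
      linarith
    simpa using this
  · obtain ⟨s, hsS, hst⟩ := exists_lt_of_csInf_lt hS ht
    exact hsS.trans (measure_mono fun x hx => le_trans hx hst.le)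

end Median

-- Convexity of the square, applied to `u + t v = (1 - t) (u / (1 - t)) + t v`.
lemma sq_add_mul_le_div_one_sub_add {t : ℝ} (ht0 : 0 ≤ t) (ht1 : t < 1) (u v : ℝ) :
    (u + t * v) ^ 2 ≤ u ^ 2 / (1 - t) + t * v ^ 2 := by
  rw [div_add' _ _ _ (by linarith), le_div_iff₀ (by linarith)]
  nlinarith [mul_nonneg ht0 (sq_nonneg (u - (1 - t) * v))]

section Absorption

variable {α : Type*} [MeasurableSpace α] {μ : Measure α} {p q r : α → ℝ} {t : ℝ}

lemma integral_sq_le_of_abs_sub_le (ht0 : 0 ≤ t) (ht1 : t < 1) (hp : ∀ x, 0 ≤ p x)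
    (hq : ∀ x, 0 ≤ q x) (hp_meas : AEStronglyMeasurable p μ)
    (hrq : ∫ x, r x ^ 2 ∂μ ≤ ∫ x, q x ^ 2 ∂μ) (hpq : ∀ x, |p x - q x| ≤ t * |r x|) :
    ∫ x, r x ^ 2 ∂μ ≤ 1 / (1 - t) ^ 2 * ∫ x, p x ^ 2 ∂μ := by
  have hRHS : 0 ≤ 1 / (1 - t) ^ 2 * ∫ x, p x ^ 2 ∂μ := by positivity
  by_cases hr : Integrable (fun x => r x ^ 2) μ
  swap
  · rwa [integral_undef hr]
  by_cases hq' : Integrable (fun x => q x ^ 2) μ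
  swap
  · rw [integral_undef hq'] at hrq
    linarith
  have hp' : Integrable (fun x => p x ^ 2) μ := by
    refine ((hq'.add hr).const_mul 2).mono' (hp_meas.pow 2) (Eventually.of_forall fun x => ?_)
    have hpx : p x ≤ q x + |r x| := by
      nlinarith [(abs_sub_le_iff.1 (hpq x)).1, abs_nonneg (r x)]
    rw [Real.norm_of_nonneg (sq_nonneg _)]
    show p x ^ 2 ≤ 2 * (q x ^ 2 + r x ^ 2)
    nlinarith [pow_le_pow_left₀ (hp x) hpx 2, sq_nonneg (q x - |r x|), sq_abs (r x)]
  have hq_le : ∫ x, q x ^ 2 ∂μ ≤ (∫ x, p x ^ 2 ∂μ) / (1 - t) + t * ∫ x, r x ^ 2 ∂μ := by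
    rw [← integral_div, ← integral_const_mul, ← integral_add (hp'.div_const _) (hr.const_mul t)]
    refine integral_mono hq' ((hp'.div_const _).add (hr.const_mul t)) fun x => ?_
    have hqx : q x ≤ p x + t * |r x| := by linarith [(abs_sub_le_iff.1 (hpq x)).2]
    calc q x ^ 2 ≤ (p x + t * |r x|) ^ 2 := pow_le_pow_left₀ (hq x) hqx 2
      _ ≤ p x ^ 2 / (1 - t) + t * |r x| ^ 2 := sq_add_mul_le_div_one_sub_add ht0 ht1 _ _
      _ = p x ^ 2 / (1 - t) + t * r x ^ 2 := by rw [sq_abs]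
  have h1t : 0 < 1 - t := by linarith
  have habsorb : (1 - t) * ∫ x, r x ^ 2 ∂μ ≤ (∫ x, p x ^ 2 ∂μ) / (1 - t) := by linarith
  rw [div_mul_eq_mul_div, one_mul, le_div_iff₀ (by positivity)]
  calc (∫ x, r x ^ 2 ∂μ) * (1 - t) ^ 2 = (1 - t) * ((1 - t) * ∫ x, r x ^ 2 ∂μ) := by ring
    _ ≤ (1 - t) * ((∫ x, p x ^ 2 ∂μ) / (1 - t)) := by gcongr
    _ = ∫ x, p x ^ 2 ∂μ := mul_div_cancel₀ _ h1t.ne'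

end Absorption

section Calculus

variable {E : Type*} [NormedAddCommGroup E] {a b : ℝ}

lemma abs_norm_fderiv_mul_sub_le [NormedSpace ℝ E] {u v : E → ℝ} {x : E}
    (hu : DifferentiableAt ℝ u x) (hv : DifferentiableAt ℝ v x) :
    |‖fderiv ℝ (fun y => u y * v y) x‖ - |u x| * ‖fderiv ℝ v x‖| ≤ |v x| * ‖fderiv ℝ u x‖ := by
  rw [fderiv_fun_mul hu hv]
  calc _ = |‖u x • fderiv ℝ v x + v x • fderiv ℝ u x‖ - ‖u x • fderiv ℝ v x‖| := by
        rw [norm_smul, Real.norm_eq_abs]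
    _ ≤ ‖u x • fderiv ℝ v x + v x • fderiv ℝ u x - u x • fderiv ℝ v x‖ :=
        abs_norm_sub_norm_le _ _
    _ = |v x| * ‖fderiv ℝ u x‖ := by rw [add_sub_cancel_left, norm_smul, Real.norm_eq_abs]

lemma add_mul_norm_sq_pos (ha : 0 < a) (hb : 0 ≤ b) (x : E) : 0 < a + b * ‖x‖ ^ 2 :=
  add_pos_of_pos_of_nonneg ha (mul_nonneg hb (sq_nonneg _))

variable [InnerProductSpace ℝ E]

lemma norm_gradient_eq_norm_fderiv [CompleteSpace E] (f : E → ℝ) (x : E) :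
    ‖gradient f x‖ = ‖fderiv ℝ f x‖ :=
  (InnerProductSpace.toDual ℝ E).symm.norm_map _

lemma contDiff_sqrt_add_mul_norm_sq (ha : 0 < a) (hb : 0 ≤ b) {k : WithTop ℕ∞} :
    ContDiff ℝ k fun x : E => √(a + b * ‖x‖ ^ 2) :=
  (contDiff_const.add (contDiff_const.mul (contDiff_norm_sq ℝ))).sqrt fun x =>
    (add_mul_norm_sq_pos ha hb x).ne'

lemma norm_fderiv_sqrt_add_mul_norm_sq_le (ha : 0 < a) (hb : 0 ≤ b) (x : E) :
    ‖fderiv ℝ (fun x : E => √(a + b * ‖x‖ ^ 2)) x‖ ≤ √b := by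
  have hs : 0 < √(a + b * ‖x‖ ^ 2) := sqrt_pos.2 (add_mul_norm_sq_pos ha hb x)
  have hx : √b * ‖x‖ ≤ √(a + b * ‖x‖ ^ 2) := by
    rw [← sqrt_sq (norm_nonneg x), ← sqrt_mul hb, sqrt_sq (norm_nonneg x)]
    exact sqrt_le_sqrt (by linarith)
  have hd := (((hasFDerivAt_id x).norm_sq.const_mul b).const_add a).sqrt
    (add_mul_norm_sq_pos ha hb x).ne'
  simp only [id_eq] at hd
  rw [hd.fderiv]
  refine ContinuousLinearMap.opNorm_le_bound _ (sqrt_nonneg b) fun y => ?_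
  simp only [smul_apply, ContinuousLinearMap.comp_apply, innerSL_apply_apply,
    ContinuousLinearMap.id_apply, smul_eq_mul, nsmul_eq_mul, Nat.cast_ofNat, norm_mul, norm_div,
    norm_one, norm_ofNat, Real.norm_eq_abs, abs_of_pos hs, abs_of_nonneg hb]
  rw [show 1 / (2 * √(a + b * ‖x‖ ^ 2)) * (b * (2 * |inner ℝ x y|))
      = b * |inner ℝ x y| / √(a + b * ‖x‖ ^ 2) by field_simp, div_le_iff₀ hs]
  calc b * |inner ℝ x y| ≤ b * (‖x‖ * ‖y‖) := by gcongr; exact abs_real_inner_le_norm x y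
    _ = √b * (√b * ‖x‖) * ‖y‖ := by rw [← mul_assoc √b, mul_self_sqrt hb, mul_assoc]
    _ ≤ √b * √(a + b * ‖x‖ ^ 2) * ‖y‖ := by gcongr
    _ = √b * ‖y‖ * √(a + b * ‖x‖ ^ 2) := by ring

lemma abs_norm_gradient_sub_le [CompleteSpace E] (ha : 0 < a) (hb : 0 ≤ b) {g : E → ℝ} {x : E}
    (hg : DifferentiableAt ℝ g x) (m : ℝ) :
    |‖gradient g x‖ - √(a + b * ‖x‖ ^ 2) *
        ‖gradient (fun y => (g y - m) / √(a + b * ‖y‖ ^ 2)) x‖| ≤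
      √b * |(g x - m) / √(a + b * ‖x‖ ^ 2)| := by
  set s : E → ℝ := fun y => √(a + b * ‖y‖ ^ 2)
  set f : E → ℝ := fun y => (g y - m) / s y
  have hs : ∀ y, 0 < s y := fun y => sqrt_pos.2 (add_mul_norm_sq_pos ha hb y)
  have hs_diff : DifferentiableAt ℝ s x :=
    (contDiff_sqrt_add_mul_norm_sq ha hb (k := 1)).differentiable one_ne_zero x
  have hf_diff : DifferentiableAt ℝ f x := by
    simp only [f, div_eq_mul_inv]
    exact (hg.sub_const m).fun_mul (hs_diff.fun_inv (hs x).ne')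
  have hsf : (fun y => s y * f y) = fun y => g y - m :=
    funext fun y => mul_div_cancel₀ _ (hs y).ne'
  have hprod := abs_norm_fderiv_mul_sub_le hs_diff hf_diff
  rw [hsf, fderiv_sub_const, abs_of_pos (hs x)] at hprod
  rw [norm_gradient_eq_norm_fderiv, norm_gradient_eq_norm_fderiv]
  calc _ ≤ |f x| * ‖fderiv ℝ s x‖ := hprod
    _ ≤ |f x| * √b := by gcongr; exact norm_fderiv_sqrt_add_mul_norm_sq_le ha hb x
    _ = √b * |f x| := mul_comm _ _

end Calculus

/-- **Proposition 3.3**: assume the probability measure `μ` on `ℝⁿ` satisfies the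
weighted Poincaré-type inequality around medians
`∫ |g − m|² dμ ≤ ∫ |∇g|² (a + b|x|²) dμ` (for smooth `g` with `μ`-median `m`),
with constants `a > 0` and `0 ≤ b < 1`.  Then for any smooth `g`,
`inf_c ∫ |g − c|²/(a + b|x|²) dμ ≤ (1/(1 − √b)²) ∫ |∇g|² dμ`. -/
theorem weighted_poincare_median_implies_reversed
    {n : ℕ} (μ : Measure (EuclideanSpace ℝ (Fin n))) (hμp : IsProbabilityMeasure μ)
    (a b : ℝ) (ha : 0 < a) (hb0 : 0 ≤ b) (hb1 : b < 1)
    (H : ∀ g : EuclideanSpace ℝ (Fin n) → ℝ, ContDiff ℝ (⊤ : ℕ∞) g →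
      ∀ m : ℝ, (1 / 2 : ℝ≥0∞) ≤ μ {x | m ≤ g x} → (1 / 2 : ℝ≥0∞) ≤ μ {x | g x ≤ m} →
        ∫ x, (g x - m) ^ 2 ∂μ ≤ ∫ x, ‖gradient g x‖ ^ 2 * (a + b * ‖x‖ ^ 2) ∂μ)
    (g : EuclideanSpace ℝ (Fin n) → ℝ) (hg : ContDiff ℝ (⊤ : ℕ∞) g) :
    (⨅ c : ℝ, ∫ x, (g x - c) ^ 2 / (a + b * ‖x‖ ^ 2) ∂μ) ≤
      (1 / (1 - Real.sqrt b) ^ 2) * ∫ x, ‖gradient g x‖ ^ 2 ∂μ := by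
  obtain ⟨m, hm_ge, hm_le⟩ := exists_median (μ := μ) hg.continuous.measurable
  have hs : ∀ x : EuclideanSpace ℝ (Fin n), 0 < √(a + b * ‖x‖ ^ 2) :=
    fun x => sqrt_pos.2 (add_mul_norm_sq_pos ha hb0 x)
  set f := fun x => (g x - m) / √(a + b * ‖x‖ ^ 2)
  have hf : ContDiff ℝ (⊤ : ℕ∞) f :=
    (hg.sub contDiff_const).div (contDiff_sqrt_add_mul_norm_sq ha hb0) fun x => (hs x).ne'
  have hf_poincare := H f hf 0 (by simpa [f, le_div_iff₀ (hs _), sub_nonneg] using hm_ge)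
    (by simpa [f, div_le_iff₀ (hs _), sub_nonpos] using hm_le)
  have hbdd : BddBelow (range fun c => ∫ x, (g x - c) ^ 2 / (a + b * ‖x‖ ^ 2) ∂μ) :=
    ⟨0, by rintro _ ⟨c, rfl⟩; exact integral_nonneg fun x => by positivity⟩
  calc (⨅ c : ℝ, ∫ x, (g x - c) ^ 2 / (a + b * ‖x‖ ^ 2) ∂μ)
      ≤ ∫ x, (g x - m) ^ 2 / (a + b * ‖x‖ ^ 2) ∂μ := ciInf_le hbdd m
    _ = ∫ x, f x ^ 2 ∂μ := by simp [f, div_pow, sq_sqrt (add_mul_norm_sq_pos ha hb0 _).le]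
    _ ≤ _ := by
      refine integral_sq_le_of_abs_sub_le (sqrt_nonneg b) (by simpa using sqrt_lt_sqrt hb0 hb1)
        (fun x => norm_nonneg _) (fun x => by positivity) ?_ ?_
        fun x => abs_norm_gradient_sub_le ha hb0 (hg.differentiable (by simp) x) m
      · simp_rw [norm_gradient_eq_norm_fderiv]
        exact (hg.continuous_fderiv (by simp)).norm.aestronglyMeasurable
      · simpa [mul_pow, sq_sqrt (add_mul_norm_sq_pos ha hb0 _).le, mul_comm] using hf_poincare
end
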